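/- Under Assumptions 0 and 1, a point q* ∈ S° maximizes ℓ over S (i.e. ℓ(q) ≤ ℓ(q*) for all q ∈ S) if and only if g(q*)_k = 1 for every k = 1, …, K, where g(q)_k = (1/(2M)) Σ_{m=1}^M Σ_{i=1}^I x_{im} p_{kim}/⟨q, p_{·im}⟩ is the k-th component of the gradient of ℓ at q. -/

import Mathlib

open scoped BigOperators

/-- Membership in the simplex `S = {q : q_k ≥ 0, Σ_k q_k = 1}`. -/
def memS {K : ℕ} (q : Fin K → ℝ) : Prop :=
  (∀ k, 0 ≤ q k) ∧ ∑ k, q k = 1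

/-- Membership in the relative interior `S° = {q ∈ S : q_k > 0 for all k}`. -/
def memSInt {K : ℕ} (q : Fin K → ℝ) : Prop :=
  (∀ k, 0 < q k) ∧ ∑ k, q k = 1

/-- The (normalized) log-likelihood of the admixture model, with values in the
extended reals, using the convention `x · log 0 = −∞` for `x > 0` (and the term
is `0` when `x = 0`). -/
noncomputable def ell {K I M : ℕ} (p : Fin K → Fin I → Fin M → ℝ)
    (x : Fin I → Fin M → ℕ) (q : Fin K → ℝ) : EReal :=
  ((1 / (2 * (M : ℝ)) : ℝ) : EReal) *
    ∑ m : Fin M, ∑ i : Fin I,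
      (if x i m = 0 then (0 : EReal)
       else if (∑ k : Fin K, q k * p k i m) ≤ 0 then (⊥ : EReal)
       else (((x i m : ℝ) * Real.log (∑ k : Fin K, q k * p k i m) : ℝ) : EReal))

/-- The `k`-th component of the gradient of the log-likelihood at `q`. -/
noncomputable def gradEll {K I M : ℕ} (p : Fin K → Fin I → Fin M → ℝ)
    (x : Fin I → Fin M → ℕ) (q : Fin K → ℝ) (k : Fin K) : ℝ :=
  (1 / (2 * (M : ℝ))) *
    ∑ m : Fin M, ∑ i : Fin I,
      (x i m : ℝ) * p k i m / (∑ l : Fin K, q l * p l i m)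

/-!
The log-likelihood is concave on the region where it is finite, and its gradient `g` satisfies
`⟨q, g(q)⟩ = 1` because each genotype column sums to `2`. Concavity (`log y ≤ y - 1`) gives
`ℓ(q) ≤ ℓ(q*) + ⟨q - q*, g(q*)⟩`, and `⟨q - q*, g(q*)⟩ = ⟨q, 1⟩ - 1 = 0` when `g(q*) = 1`.
Conversely, at an interior maximizer the derivative of `ℓ` along every direction tangent to the
simplex is zero; the direction `e_k - q*` gives `g(q*)_k - 1 = 0`.
-/

lemma EReal.coe_finset_sum {ι : Type*} (s : Finset ι) (f : ι → ℝ) :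
    ((∑ i ∈ s, f i : ℝ) : EReal) = ∑ i ∈ s, (f i : EReal) :=
  map_sum (⟨⟨((↑) : ℝ → EReal), EReal.coe_zero⟩, EReal.coe_add⟩ : ℝ →+ EReal) f s

lemma eventually_zero_lt_add_mul {a : ℝ} (ha : 0 < a) (b : ℝ) :
    ∀ᶠ t in nhds (0 : ℝ), 0 < a + t * b := by
  refine Filter.Tendsto.eventually_const_lt ha ?_
  simpa using (by fun_prop : Continuous fun t : ℝ => a + t * b).tendsto 0

lemma sum_add_smul_mul {ι : Type*} [Fintype ι] (q v c : ι → ℝ) (t : ℝ) :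
    ∑ k, (q + t • v) k * c k = ∑ k, q k * c k + t * ∑ k, v k * c k := by
  simp only [Pi.add_apply, Pi.smul_apply, smul_eq_mul, add_mul, Finset.sum_add_distrib,
    Finset.mul_sum, mul_assoc]

section Likelihood

variable {K I M : ℕ} (p : Fin K → Fin I → Fin M → ℝ) (x : Fin I → Fin M → ℕ)

def PosOnObserved (q : Fin K → ℝ) : Prop :=
  ∀ i m, x i m ≠ 0 → 0 < ∑ k, q k * p k i m

noncomputable def ellReal (q : Fin K → ℝ) : ℝ :=
  (1 / (2 * (M : ℝ))) * ∑ m, ∑ i, (x i m : ℝ) * Real.log (∑ k, q k * p k i m)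

variable {p x}

lemma ell_eq_coe_ellReal {q : Fin K → ℝ} (hq : PosOnObserved p x q) :
    ell p x q = ellReal p x q := by
  simp only [ell, ellReal, EReal.coe_mul, EReal.coe_finset_sum]
  congr 1
  refine Finset.sum_congr rfl fun m _ => Finset.sum_congr rfl fun i _ => ?_
  by_cases hx : x i m = 0
  · simp [hx]
  · simp [hx, not_le.2 (hq i m hx)]

lemma ell_eq_bot_of_not_posOnObserved {q : Fin K → ℝ} (hq : ¬ PosOnObserved p x q) :
    ell p x q = ⊥ := by
  simp only [PosOnObserved, not_forall, not_lt] at hq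
  obtain ⟨i, m, hx, hle⟩ := hq
  have hM : (0 : ℝ) < M := Nat.cast_pos.2 (Fin.pos m)
  unfold ell
  refine (congrArg _ ?_).trans (EReal.coe_mul_bot_of_pos (by positivity : (0 : ℝ) < 1 / (2 * M)))
  exact WithBot.sum_eq_bot_iff.2 ⟨m, Finset.mem_univ _,
    WithBot.sum_eq_bot_iff.2 ⟨i, Finset.mem_univ _, by simp only [hx, hle, if_false, if_true]; rfl⟩⟩

lemma posOnObserved_of_pos (hp0 : ∀ k i m, 0 ≤ p k i m)
    (hA0 : ∀ i m, 0 < x i m → ∃ k, 0 < p k i m) {q : Fin K → ℝ} (hq : ∀ k, 0 < q k) :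
    PosOnObserved p x q := by
  intro i m hx
  obtain ⟨k, hk⟩ := hA0 i m (Nat.pos_of_ne_zero hx)
  exact Finset.sum_pos' (fun j _ => mul_nonneg (hq j).le (hp0 j i m))
    ⟨k, Finset.mem_univ k, mul_pos (hq k) hk⟩

lemma sum_mul_gradEll (q v : Fin K → ℝ) :
    ∑ k, v k * gradEll p x q k =
      1 / (2 * (M : ℝ)) * ∑ m, ∑ i, (x i m : ℝ) * (∑ k, v k * p k i m) / ∑ k, q k * p k i m := by
  simp only [gradEll, Finset.mul_sum, Finset.sum_div]
  rw [Finset.sum_comm]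
  refine Finset.sum_congr rfl fun m _ => ?_
  rw [Finset.sum_comm]
  refine Finset.sum_congr rfl fun i _ => Finset.sum_congr rfl fun k _ => ?_
  ring

lemma sum_mul_gradEll_self (hM : 1 ≤ M) (hxsum : ∀ m, ∑ i, x i m = 2) {q : Fin K → ℝ}
    (hq : PosOnObserved p x q) : ∑ k, q k * gradEll p x q k = 1 := by
  have hterm : ∀ m i, (x i m : ℝ) * (∑ k, q k * p k i m) / ∑ k, q k * p k i m = x i m := by
    intro m i
    by_cases hx : x i m = 0
    · simp [hx]
    · exact mul_div_cancel_right₀ _ (hq i m hx).ne'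
  have hsum : ∀ m, ∑ i, (x i m : ℝ) = 2 := fun m => by exact_mod_cast hxsum m
  have hM' : (M : ℝ) ≠ 0 := by positivity
  simp only [sum_mul_gradEll, hterm, hsum, Finset.sum_const, Finset.card_univ, Fintype.card_fin,
    nsmul_eq_mul]
  field_simp

lemma ellReal_le_add_sum_mul_gradEll {q q' : Fin K → ℝ} (hq : PosOnObserved p x q)
    (hq' : PosOnObserved p x q') :
    ellReal p x q' ≤ ellReal p x q + ∑ k, (q' k - q k) * gradEll p x q k := by
  have hterm : ∀ m i, (x i m : ℝ) * Real.log (∑ k, q' k * p k i m) ≤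
      (x i m : ℝ) * Real.log (∑ k, q k * p k i m) +
        (x i m : ℝ) * (∑ k, (q' k - q k) * p k i m) / ∑ k, q k * p k i m := by
    intro m i
    by_cases hx : x i m = 0
    · simp [hx]
    have ha := hq' i m hx
    have hb := hq i m hx
    have hlog := Real.log_le_sub_one_of_pos (div_pos ha hb)
    rw [Real.log_div ha.ne' hb.ne', div_sub_one hb.ne'] at hlog
    have hdiff : ∑ k, (q' k - q k) * p k i m = ∑ k, q' k * p k i m - ∑ k, q k * p k i m := by
      simp only [sub_mul, Finset.sum_sub_distrib]
    rw [hdiff, mul_div_assoc, ← mul_add]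
    exact mul_le_mul_of_nonneg_left (by linarith) (Nat.cast_nonneg _)
  rw [sum_mul_gradEll, ellReal, ellReal, ← mul_add]
  refine mul_le_mul_of_nonneg_left ?_ (by positivity)
  simp only [← Finset.sum_add_distrib]
  exact Finset.sum_le_sum fun m _ => Finset.sum_le_sum fun i _ => hterm m i

lemma hasDerivAt_ellReal_add_smul {q : Fin K → ℝ} (hq : PosOnObserved p x q) (v : Fin K → ℝ) :
    HasDerivAt (fun t : ℝ => ellReal p x (q + t • v)) (∑ k, v k * gradEll p x q k) 0 := by
  simp only [ellReal, sum_add_smul_mul, sum_mul_gradEll]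
  refine HasDerivAt.const_mul _ (HasDerivAt.fun_sum fun m _ => HasDerivAt.fun_sum fun i _ => ?_)
  by_cases hx : x i m = 0
  · simpa [hx] using hasDerivAt_const (0 : ℝ) (0 : ℝ)
  have hlin : HasDerivAt (fun t => ∑ k, q k * p k i m + t * ∑ k, v k * p k i m)
      (∑ k, v k * p k i m) 0 := by
    simpa using ((hasDerivAt_id (0 : ℝ)).mul_const (∑ k, v k * p k i m)).const_add
      (∑ k, q k * p k i m)
  simpa [mul_div_assoc] using (hlin.log (by simpa using (hq i m hx).ne')).const_mul (x i m : ℝ)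

lemma eventually_memS_add_smul {q : Fin K → ℝ} (hq : memSInt q) {v : Fin K → ℝ}
    (hv : ∑ k, v k = 0) : ∀ᶠ t in nhds (0 : ℝ), memS (q + t • v) := by
  have hpos : ∀ᶠ t in nhds (0 : ℝ), ∀ k, 0 < q k + t * v k :=
    Filter.eventually_all.2 fun k => eventually_zero_lt_add_mul (hq.1 k) (v k)
  refine hpos.mono fun t ht => ⟨fun k => (ht k).le, ?_⟩
  simp [Finset.sum_add_distrib, ← Finset.mul_sum, hq.2, hv]

lemma eventually_posOnObserved_add_smul {q : Fin K → ℝ} (hq : PosOnObserved p x q)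
    (v : Fin K → ℝ) : ∀ᶠ t in nhds (0 : ℝ), PosOnObserved p x (q + t • v) := by
  simp only [PosOnObserved, sum_add_smul_mul]
  refine Filter.eventually_all.2 fun i => Filter.eventually_all.2 fun m => ?_
  by_cases hx : x i m = 0
  · exact Filter.Eventually.of_forall fun _ h => absurd hx h
  · exact (eventually_zero_lt_add_mul (hq i m hx) _).mono fun _ ht _ => ht

lemma sum_mul_gradEll_eq_zero_of_isMax {q : Fin K → ℝ} (hq : memSInt q)
    (hpos : PosOnObserved p x q) (hmax : ∀ q', memS q' → ell p x q' ≤ ell p x q)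
    {v : Fin K → ℝ} (hv : ∑ k, v k = 0) : ∑ k, v k * gradEll p x q k = 0 := by
  refine IsLocalMax.hasDerivAt_eq_zero ?_ (hasDerivAt_ellReal_add_smul hpos v)
  filter_upwards [eventually_memS_add_smul hq hv, eventually_posOnObserved_add_smul hpos v]
    with t hS hpos'
  have h := hmax _ hS
  rw [ell_eq_coe_ellReal hpos', ell_eq_coe_ellReal hpos, EReal.coe_le_coe_iff] at h
  simpa using h

end Likelihood

theorem ell_max_iff_grad_eq_one_general
    (K I M : ℕ) (hM : 1 ≤ M)
    (p : Fin K → Fin I → Fin M → ℝ)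
    (hp0 : ∀ k i m, 0 ≤ p k i m)
    (x : Fin I → Fin M → ℕ)
    (hxsum : ∀ m, ∑ i, x i m = 2)
    (hA0 : ∀ i m, 0 < x i m → ∃ k, 0 < p k i m)
    (qstar : Fin K → ℝ) (hqstar : memSInt qstar) :
    (∀ q, memS q → ell p x q ≤ ell p x qstar) ↔ (∀ k, gradEll p x qstar k = 1) := by
  have hpos : PosOnObserved p x qstar := posOnObserved_of_pos hp0 hA0 hqstar.1
  have hself : ∑ k, qstar k * gradEll p x qstar k = 1 := sum_mul_gradEll_self hM hxsum hpos
  constructor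
  · intro hmax k
    have h := sum_mul_gradEll_eq_zero_of_isMax hqstar hpos hmax
      (v := fun j => (if j = k then 1 else 0) - qstar j)
      (by simp [Finset.sum_sub_distrib, hqstar.2])
    simp only [sub_mul, Finset.sum_sub_distrib, ite_mul, one_mul, zero_mul,
      Finset.sum_ite_eq', Finset.mem_univ, if_true, hself] at h
    linarith
  · intro hg q hq
    by_cases hposq : PosOnObserved p x q
    · rw [ell_eq_coe_ellReal hposq, ell_eq_coe_ellReal hpos, EReal.coe_le_coe_iff]
      have htangent := ellReal_le_add_sum_mul_gradEll hpos hposq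
      simp only [hg, mul_one, Finset.sum_sub_distrib, hq.2, hqstar.2, sub_self, add_zero]
        at htangent
      exact htangent
    · rw [ell_eq_bot_of_not_posOnObserved hposq]
      exact bot_le

/-- Under Assumptions 0 and 1, a point `q* ∈ S°` maximizes `ℓ` over
`S` if and only if the gradient of `ℓ` at `q*` is the all-ones vector. -/
theorem ell_max_iff_grad_eq_one
    (K I M : ℕ) (hK : 2 ≤ K) (hI : 2 ≤ I) (hM : 1 ≤ M)
    (p : Fin K → Fin I → Fin M → ℝ)
    (hp0 : ∀ k i m, 0 ≤ p k i m)
    (hp1 : ∀ k m, ∑ i, p k i m = 1)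
    (x : Fin I → Fin M → ℕ)
    (hx2 : ∀ i m, x i m ≤ 2)
    (hxsum : ∀ m, ∑ i, x i m = 2)
    (hA0 : ∀ i m, 0 < x i m → ∃ k, 0 < p k i m)
    (hA1 : ∀ s : Fin K → ℝ, s ≠ 0 → ∑ k, s k = 0 →
      ∃ i m, 0 < x i m ∧ ∑ k, s k * p k i m ≠ 0)
    (qstar : Fin K → ℝ) (hqstar : memSInt qstar) :
    (∀ q, memS q → ell p x q ≤ ell p x qstar) ↔ (∀ k, gradEll p x qstar k = 1) :=
  ell_max_iff_grad_eq_one_general K I M hM p hp0 x hxsum hA0 qstar hqstar
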